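/- Every surjective affine map g : Δ^m → [q_min, q_max]^m from the polytope Δ^m (product of m probability simplices in ℝ^{m×d}) onto the box [q_min, q_max]^m given by g(u)_j = ⟨u_j, q⟩, where q ∈ ℝ^d has minimum entry q_min and maximum entry q_max with q_min < q_max, is an open map (with respect to the subspace topologies). -/

import Mathlib

/-!
Through every point `v` of the simplex, the functional `v ↦ ⟨v, q⟩` has a continuous section over
`[q_min, q_max]`: to reach a value `w`, slide `v` along the segment towards the vertex `e_max` (or
`e_min`) by the fraction of the way from `⟨v, q⟩` to `q_max` (or `q_min`) that `w` lies at.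
Taken row by row these give continuous sections of `g` through every point of `Δ^m`, and then
`g '' (U ∩ Δ^m)` is the box intersected with the union of the preimages of `U` under the sections
through the points of `U ∩ Δ^m`.
-/

open Set

def HasContinuousSectionsOn {X Y : Type*} [TopologicalSpace X] [TopologicalSpace Y]
    (f : X → Y) (S : Set X) (T : Set Y) : Prop :=
  ∀ x ∈ S, ∃ σ : Y → X, Continuous σ ∧ σ (f x) = x ∧ MapsTo σ T S ∧ RightInvOn σ f T

namespace HasContinuousSectionsOn

variable {X Y : Type*} [TopologicalSpace X] [TopologicalSpace Y] {f : X → Y} {S : Set X}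
  {T : Set Y}

theorem image_eq (h : HasContinuousSectionsOn f S T) (hf : MapsTo f S T) (hS : S.Nonempty) :
    f '' S = T := by
  obtain ⟨x, hx⟩ := hS
  obtain ⟨σ, -, -, hσS, hσf⟩ := h x hx
  exact (hσf.surjOn hσS).image_eq_of_mapsTo hf

theorem exists_isOpen_image_inter_eq (h : HasContinuousSectionsOn f S T) (hf : MapsTo f S T)
    {U : Set X} (hU : IsOpen U) : ∃ V, IsOpen V ∧ f '' (U ∩ S) = V ∩ T := by
  choose σ hσc hσx hσS hσf using h
  refine ⟨⋃ (x) (hx : x ∈ U ∩ S), σ x hx.2 ⁻¹' U,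
    isOpen_iUnion fun x => isOpen_iUnion fun hx => hU.preimage (hσc x hx.2), ?_⟩
  ext y
  constructor
  · rintro ⟨x, hx, rfl⟩
    exact ⟨mem_iUnion₂.2 ⟨x, hx, by simpa [hσx x hx.2] using hx.1⟩, hf hx.2⟩
  · rintro ⟨hy, hyT⟩
    obtain ⟨x, hx, hyU⟩ := mem_iUnion₂.1 hy
    exact ⟨σ x hx.2 y, ⟨hyU, hσS x hx.2 hyT⟩, hσf x hx.2 hyT⟩

theorem pi {ι : Type*} {X Y : ι → Type*} [∀ i, TopologicalSpace (X i)]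
    [∀ i, TopologicalSpace (Y i)] {f : ∀ i, X i → Y i} {S : ∀ i, Set (X i)} {T : ∀ i, Set (Y i)}
    (h : ∀ i, HasContinuousSectionsOn (f i) (S i) (T i)) :
    HasContinuousSectionsOn (Pi.map f) (univ.pi S) (univ.pi T) := by
  intro x hx
  choose σ hσc hσx hσS hσf using fun i => h i (x i) (hx i trivial)
  exact ⟨fun y i => σ i (y i), continuous_pi fun i => (hσc i).comp (continuous_apply i),
    funext hσx, fun y hy i _ => hσS i (hy i trivial),
    fun y hy => funext fun i => hσf i (hy i trivial)⟩

end HasContinuousSectionsOn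

section Convex

variable {E : Type*} [AddCommGroup E] [Module ℝ E] {S : Set E} {x y : E} {a b w : ℝ}

theorem Convex.add_div_smul_sub_mem (hS : Convex ℝ S) (hx : x ∈ S) (hy : y ∈ S)
    (hw : w ∈ uIcc a b) : x + ((w - a) / (b - a)) • (y - x) ∈ S := by
  refine hS.add_smul_sub_mem hx hy ?_
  rcases le_total a b with hab | hab
  · rw [uIcc_of_le hab] at hw
    exact ⟨div_nonneg (by linarith [hw.1]) (by linarith), div_le_one_of_le₀ (by linarith [hw.2])
      (by linarith)⟩
  · rw [uIcc_of_ge hab] at hw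
    rw [← neg_div_neg_eq, neg_sub, neg_sub]
    exact ⟨div_nonneg (by linarith [hw.2]) (by linarith), div_le_one_of_le₀ (by linarith [hw.1])
      (by linarith)⟩

theorem LinearMap.map_add_div_smul_sub (φ : E →ₗ[ℝ] ℝ) (hw : w ∈ uIcc (φ x) (φ y)) :
    φ (x + ((w - φ x) / (φ y - φ x)) • (y - x)) = w := by
  simp only [map_add, map_smul, map_sub, smul_eq_mul]
  rcases eq_or_ne (φ y) (φ x) with h | h
  · rw [h, uIcc_self, mem_singleton_iff] at hw
    simp [hw]
  · field_simp [sub_ne_zero.2 h]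
    ring

theorem Convex.hasContinuousSectionsOn_linearMap [TopologicalSpace E] [ContinuousAdd E]
    [ContinuousSMul ℝ E] (hS : Convex ℝ S) (φ : E →ₗ[ℝ] ℝ) {y₀ y₁ : E} (hy₀ : y₀ ∈ S)
    (hy₁ : y₁ ∈ S) (hφ : MapsTo φ S (Icc (φ y₀) (φ y₁))) :
    HasContinuousSectionsOn φ S (Icc (φ y₀) (φ y₁)) := by
  intro x hx
  set a := φ x
  -- For `w` in the interval at most one coefficient is nonzero, and a denominator vanishes only
  -- when its numerator does.
  set σ : ℝ → E := fun w =>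
    x + (max (w - a) 0 / (φ y₁ - a)) • (y₁ - x) + (min (w - a) 0 / (φ y₀ - a)) • (y₀ - x)
  have hσ : ∀ w ∈ Icc (φ y₀) (φ y₁), σ w ∈ S ∧ φ (σ w) = w := by
    intro w hw
    rcases le_total a w with h | h
    · have hw' : w ∈ uIcc a (φ y₁) := uIcc_of_le (hφ hx).2 ▸ ⟨h, hw.2⟩
      simp only [σ, max_eq_left (sub_nonneg.2 h), min_eq_right (sub_nonneg.2 h), zero_div,
        zero_smul, add_zero]
      exact ⟨hS.add_div_smul_sub_mem hx hy₁ hw', φ.map_add_div_smul_sub hw'⟩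
    · have hw' : w ∈ uIcc a (φ y₀) := uIcc_of_ge (hφ hx).1 ▸ ⟨hw.1, h⟩
      simp only [σ, max_eq_right (sub_nonpos.2 h), min_eq_left (sub_nonpos.2 h), zero_div,
        zero_smul, add_zero]
      exact ⟨hS.add_div_smul_sub_mem hx hy₀ hw', φ.map_add_div_smul_sub hw'⟩
  exact ⟨σ, by fun_prop, by simp [σ], fun w hw => (hσ w hw).1, fun w hw => (hσ w hw).2⟩

end Convex

section stdSimplex

variable {ι 𝕜 : Type*} [Fintype ι] [Semiring 𝕜] [PartialOrder 𝕜] [IsOrderedRing 𝕜]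
  {v q : ι → 𝕜} {c : 𝕜}

theorem le_dotProduct_of_mem_stdSimplex (hv : v ∈ stdSimplex 𝕜 ι) (hc : ∀ i, c ≤ q i) :
    c ≤ v ⬝ᵥ q :=
  calc c = ∑ i, v i * c := by rw [← Finset.sum_mul, hv.2, one_mul]
    _ ≤ v ⬝ᵥ q := Finset.sum_le_sum fun i _ => mul_le_mul_of_nonneg_left (hc i) (hv.1 i)

theorem dotProduct_le_of_mem_stdSimplex (hv : v ∈ stdSimplex 𝕜 ι) (hc : ∀ i, q i ≤ c) :
    v ⬝ᵥ q ≤ c :=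
  calc v ⬝ᵥ q ≤ ∑ i, v i * c :=
        Finset.sum_le_sum fun i _ => mul_le_mul_of_nonneg_left (hc i) (hv.1 i)
    _ = c := by rw [← Finset.sum_mul, hv.2, one_mul]

end stdSimplex

theorem stmt_2_general (m d : ℕ) (q : Fin d → ℝ) (lmin lmax : Fin d)
    (hmin : ∀ lam, q lmin ≤ q lam) (hmax : ∀ lam, q lam ≤ q lmax)
    (Δm : Set (Fin m → Fin d → ℝ))
    (hΔm : Δm = {u | ∀ j, u j ∈ stdSimplex ℝ (Fin d)})
    (Box : Set (Fin m → ℝ))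
    (hBox : Box = {w | ∀ j, w j ∈ Set.Icc (q lmin) (q lmax)})
    (g : (Fin m → Fin d → ℝ) → (Fin m → ℝ))
    (hg : ∀ u j, g u j = ∑ lam, u j lam * q lam) :
    g '' Δm = Box ∧
      ∀ U : Set (Fin m → Fin d → ℝ), IsOpen U →
        ∃ V : Set (Fin m → ℝ), IsOpen V ∧ g '' (U ∩ Δm) = V ∩ Box := by
  set φ := (dotProductBilin ℝ ℝ).flip q
  obtain rfl : g = Pi.map fun _ => φ := funext₂ hg
  subst hΔm hBox
  simp only [← mem_univ_pi, ofPred_mem_eq]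
  have hbounds : MapsTo φ (stdSimplex ℝ (Fin d)) (Icc (q lmin) (q lmax)) := fun v hv =>
    ⟨le_dotProduct_of_mem_stdSimplex hv hmin, dotProduct_le_of_mem_stdSimplex hv hmax⟩
  have hrow : HasContinuousSectionsOn φ (stdSimplex ℝ (Fin d)) (Icc (q lmin) (q lmax)) := by
    have hφ (l : Fin d) : φ (Pi.single l 1) = q l := single_one_dotProduct l q
    simpa only [hφ] using (convex_stdSimplex ℝ (Fin d)).hasContinuousSectionsOn_linearMap φ
      (single_mem_stdSimplex ℝ lmin) (single_mem_stdSimplex ℝ lmax) (by simpa only [hφ])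
  have hsec := HasContinuousSectionsOn.pi fun _ : Fin m => hrow
  have hmaps := piMap_mapsTo_pi (I := univ) fun (_ : Fin m) _ => hbounds
  exact ⟨hsec.image_eq hmaps ⟨fun _ => Pi.single lmin 1, fun _ _ => single_mem_stdSimplex ℝ lmin⟩,
    fun U hU => hsec.exists_isOpen_image_inter_eq hmaps hU⟩

/-- The surjective affine map `u ↦ (⟨u_j, q⟩)_j` from the product of probability simplices
onto the box `[q_min, q_max]^m` is an open map (for the subspace topologies). -/
theorem stmt_2 (m d : ℕ) (q : Fin d → ℝ) (lmin lmax : Fin d)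
    (hmin : ∀ lam, q lmin ≤ q lam) (hmax : ∀ lam, q lam ≤ q lmax)
    (hlt : q lmin < q lmax)
    (Δm : Set (Fin m → Fin d → ℝ))
    (hΔm : Δm = {u | ∀ j, u j ∈ stdSimplex ℝ (Fin d)})
    (Box : Set (Fin m → ℝ))
    (hBox : Box = {w | ∀ j, w j ∈ Set.Icc (q lmin) (q lmax)})
    (g : (Fin m → Fin d → ℝ) → (Fin m → ℝ))
    (hg : ∀ u j, g u j = ∑ lam, u j lam * q lam) :
    g '' Δm = Box ∧
      ∀ U : Set (Fin m → Fin d → ℝ), IsOpen U →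
        ∃ V : Set (Fin m → ℝ), IsOpen V ∧ g '' (U ∩ Δm) = V ∩ Box :=
  stmt_2_general m d q lmin lmax hmin hmax Δm hΔm Box hBox g hg
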